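/- arXiv:2406.12491 — 2 statements merged into one kernel-verified Lean document; each statement's English description precedes it below -/
import Mathlib

section
/- Let M : I^p → I be a symmetric mean that is C² in a neighborhood of the diagonal, and define ξ_M(x) := −p²·∂_1∂_2M(x,…,x). Then for every x ∈ I and s ∈ ℝ^p, as t → 0 one has M(x·1 + t·s) = x + t·E(s) + (t²/2)·ξ_M(x)·Var(s) + o(t²), where E(s) = (1/p)Σs_i and Var(s) = (1/p)Σs_i² − (E(s))². -/
open Filter Asymptotics Topology

section helpers

lemma peano_aux {φ : ℝ → ℝ} {V : Set ℝ} (hV : IsOpen V) (h0 : (0:ℝ) ∈ V)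
    (hdiff : DifferentiableOn ℝ φ V) (hφ0 : φ 0 = 0)
    (hd : (fun t => deriv φ t) =o[nhds (0:ℝ)] fun t => t) :
    φ =o[nhds (0:ℝ)] fun t => t ^ 2 := by
  rw [isLittleO_iff]
  intro ε hε
  rw [isLittleO_iff] at hd
  have h1 := hd (half_pos hε)
  have h2 : ∀ᶠ t in nhds (0:ℝ), t ∈ V := hV.eventually_mem h0
  obtain ⟨δ, hδpos, hδ⟩ := Metric.eventually_nhds_iff_ball.1 (h1.and h2)
  rw [Metric.eventually_nhds_iff_ball]
  refine ⟨δ, hδpos, fun t ht => ?_⟩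
  have habs : ∀ u ∈ Set.uIcc (0:ℝ) t, |u| ≤ |t| := by
    intro u hu
    rw [Set.uIcc_eq_union] at hu
    rcases hu with hu | hu <;> rw [Set.mem_Icc] at hu <;> cases abs_cases t <;>
      cases abs_cases u <;> linarith [hu.1, hu.2]
  have hsub : Set.uIcc (0:ℝ) t ⊆ Metric.ball (0:ℝ) δ := by
    intro u hu
    simp only [Metric.mem_ball, Real.dist_eq, sub_zero] at ht ⊢
    exact lt_of_le_of_lt (habs u hu) ht
  have key : ‖φ t - φ 0‖ ≤ (ε/2 * |t|) * ‖t - 0‖ := by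
    apply Convex.norm_image_sub_le_of_norm_hasDerivWithin_le
      (f' := fun u => deriv φ u) (fun u hu => ?_) (fun u hu => ?_) (convex_uIcc 0 t)
      Set.left_mem_uIcc Set.right_mem_uIcc
    · exact ((hdiff.differentiableAt (hV.mem_nhds (hδ u (hsub hu)).2)).hasDerivAt).hasDerivWithinAt
    · have hb := (hδ u (hsub hu)).1
      simp only [Real.norm_eq_abs] at hb ⊢
      refine hb.trans ?_
      have := habs u hu
      nlinarith [half_pos hε]
  rw [hφ0, sub_zero, sub_zero] at key
  calc ‖φ t‖ ≤ ε/2 * |t| * ‖t‖ := key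
    _ ≤ ε * ‖t^2‖ := by
        simp only [Real.norm_eq_abs, abs_pow, pow_two, abs_mul]
        nlinarith [abs_nonneg t, mul_nonneg (abs_nonneg t) (abs_nonneg t), hε]

lemma peano {g : ℝ → ℝ} {V : Set ℝ} (hV : IsOpen V) (h0 : (0:ℝ) ∈ V)
    (hg : ContDiffOn ℝ 2 g V) :
    (fun t => g t - (g 0 + deriv g 0 * t + deriv (deriv g) 0 / 2 * t ^ 2))
      =o[nhds (0:ℝ)] fun t => t ^ 2 := by
  have hg' : ContDiffOn ℝ 1 (deriv g) V := hg.deriv_of_isOpen hV (by norm_num)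
  have hgd : DifferentiableOn ℝ g V := hg.differentiableOn (by norm_num)
  have hg'd : DifferentiableOn ℝ (deriv g) V := hg'.differentiableOn (by norm_num)
  have hd2 : HasDerivAt (deriv g) (deriv (deriv g) 0) 0 :=
    (hg'd.differentiableAt (hV.mem_nhds h0)).hasDerivAt
  set P : ℝ → ℝ := fun t => g 0 + deriv g 0 * t + deriv (deriv g) 0 / 2 * t ^ 2 with hP
  have hPdiff : Differentiable ℝ P := by rw [hP]; fun_prop
  have hder : ∀ t ∈ V, deriv (fun u => g u - P u) t
      = deriv g t - (deriv g 0 + deriv (deriv g) 0 * t) := by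
    intro t ht
    have h1 : DifferentiableAt ℝ g t := hgd.differentiableAt (hV.mem_nhds ht)
    have h2 : HasDerivAt P (deriv g 0 + deriv (deriv g) 0 * t) t := by
      rw [hP]
      have h1 : HasDerivAt (fun u : ℝ => g 0 + deriv g 0 * u + deriv (deriv g) 0 / 2 * u ^ 2)
          (0 + deriv g 0 * 1 + deriv (deriv g) 0 / 2 * (2 * t)) t := by
        refine HasDerivAt.add (HasDerivAt.add (hasDerivAt_const t _) ?_) ?_
        · simpa using (hasDerivAt_id t).const_mul (deriv g 0)
        · simpa using ((hasDerivAt_pow 2 t).const_mul (deriv (deriv g) 0 / 2))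
      convert h1 using 1; ring
    rw [deriv_fun_sub h1 h2.differentiableAt, h2.deriv]
  have hlo : (fun t => deriv (fun u => g u - P u) t) =o[nhds (0:ℝ)] fun t => t := by
    have heq : (fun t => deriv (fun u => g u - P u) t)
        =ᶠ[nhds (0:ℝ)] fun t => deriv g t - (deriv g 0 + deriv (deriv g) 0 * t) := by
      filter_upwards [hV.eventually_mem h0] with t ht using hder t ht
    refine IsLittleO.congr' ?_ heq.symm (EventuallyEq.refl _ _)
    have := hd2.isLittleO
    simp only [sub_zero] at this
    refine this.congr_left fun t => ?_
    simp [ContinuousLinearMap.smulRight_apply, ContinuousLinearMap.one_apply]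
    ring
  exact peano_aux hV h0 (hgd.sub hPdiff.differentiableOn) (by simp [hP]) hlo



variable {E : Type*} [NormedAddCommGroup E] [NormedSpace ℝ E]

/-- derivatives of a C² function along a line -/
lemma line_derivs {M : E → ℝ} {U : Set E} (hU : IsOpen U) (hC2 : ContDiffOn ℝ 2 M U)
    (a s : E) (ha : a ∈ U) :
    ∃ V : Set ℝ, IsOpen V ∧ (0:ℝ) ∈ V ∧
      ContDiffOn ℝ 2 (fun t : ℝ => M (a + t • s)) V ∧
      deriv (fun t : ℝ => M (a + t • s)) 0 = fderiv ℝ M a s ∧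
      deriv (deriv (fun t : ℝ => M (a + t • s))) 0 = fderiv ℝ (fderiv ℝ M) a s s := by
  set c : ℝ → E := fun t => a + t • s with hc
  have hccd : ContDiff ℝ 2 c := by rw [hc]; fun_prop
  have hcder : ∀ t : ℝ, HasDerivAt c s t := by
    intro t
    rw [hc]
    simpa using ((hasDerivAt_id t).smul_const s).const_add a
  have hc0 : c 0 = a := by simp [hc]
  have hMg : ∀ t : ℝ, c t ∈ U → HasDerivAt (fun u : ℝ => M (a + u • s)) (fderiv ℝ M (c t) s) t := by
    intro t ht
    have hM : DifferentiableAt ℝ M (c t) :=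
      (hC2.differentiableOn (by norm_num)).differentiableAt (hU.mem_nhds ht)
    exact hM.hasFDerivAt.comp_hasDerivAt t (hcder t)
  have h0U : c 0 ∈ U := by rw [hc0]; exact ha
  have hB : HasFDerivAt (fderiv ℝ M) (fderiv ℝ (fderiv ℝ M) a) a :=
    (((hC2.contDiffAt (hU.mem_nhds ha)).fderiv_right
      (by norm_num : (1:WithTop ℕ∞)+1 ≤ 2)).differentiableAt one_ne_zero).hasFDerivAt
  refine ⟨c ⁻¹' U, hU.preimage hccd.continuous, h0U, ?_, ?_, ?_⟩
  · exact hC2.comp hccd.contDiffOn (fun t ht => ht)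
  · rw [(hMg 0 h0U).deriv, hc0]
  · have hev : deriv (fun u : ℝ => M (a + u • s)) =ᶠ[nhds (0:ℝ)]
        fun t => fderiv ℝ M (c t) s := by
      filter_upwards [(hU.preimage hccd.continuous).eventually_mem h0U] with t ht
      exact (hMg t ht).deriv
    rw [hev.deriv_eq]
    have hB0 : HasFDerivAt (fderiv ℝ M) (fderiv ℝ (fderiv ℝ M) a) (c 0) := by
      rw [hc0]; exact hB
    have hcomp : HasDerivAt (fun t : ℝ => fderiv ℝ M (c t)) (fderiv ℝ (fderiv ℝ M) a s) 0 :=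
      hB0.comp_hasDerivAt 0 (hcder 0)
    exact (((ContinuousLinearMap.apply ℝ ℝ s).hasFDerivAt.comp_hasDerivAt 0 hcomp)).deriv

/-- expansion of second derivative over the standard basis -/
lemma bilin_expand {p : ℕ} (B : (Fin p → ℝ) →L[ℝ] (Fin p → ℝ) →L[ℝ] ℝ) (u v : Fin p → ℝ) :
    B u v = ∑ i, ∑ j, u i * v j * B (Pi.single i 1) (Pi.single j 1) := by
  have hbasis : ∀ w : Fin p → ℝ, ∑ i, w i • (Pi.single i 1 : Fin p → ℝ) = w := by
    intro w; ext k
    simp [Finset.sum_apply, Pi.single_apply]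
  conv_lhs => rw [← hbasis u, ← hbasis v]
  simp only [map_sum, map_smul, ContinuousLinearMap.sum_apply, ContinuousLinearMap.smul_apply,
    ContinuousLinearMap.coe_sum', Finset.sum_apply, smul_eq_mul, Finset.mul_sum]
  rw [Finset.sum_comm]
  exact Finset.sum_congr rfl fun i _ => Finset.sum_congr rfl fun j _ => by ring

lemma perm_invariance {p : ℕ} {M : (Fin p → ℝ) → ℝ} {U : Set (Fin p → ℝ)}
    (hU : IsOpen U) (hC2 : ContDiffOn ℝ 2 M U)
    (hsym : ∀ (y : Fin p → ℝ) (σ : Equiv.Perm (Fin p)), M (y ∘ σ) = M y)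
    {a : Fin p → ℝ} (ha : a ∈ U) (hconst : ∀ σ : Equiv.Perm (Fin p), a ∘ σ = a)
    (σ : Equiv.Perm (Fin p)) :
    (∀ v, fderiv ℝ M a (v ∘ σ) = fderiv ℝ M a v) ∧
    (∀ u v, fderiv ℝ (fderiv ℝ M) a (u ∘ σ) (v ∘ σ) = fderiv ℝ (fderiv ℝ M) a u v) := by
  set T : (Fin p → ℝ) →L[ℝ] (Fin p → ℝ) :=
    ContinuousLinearMap.pi fun i => ContinuousLinearMap.proj (σ i) with hTdef
  have hT : ∀ y : Fin p → ℝ, T y = y ∘ σ := fun y => rfl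
  have hTa : T a = a := by rw [hT]; exact hconst σ
  have hWopen : IsOpen (U ∩ T ⁻¹' U) := hU.inter (hU.preimage T.continuous)
  have haW : a ∈ U ∩ T ⁻¹' U := ⟨ha, by simp only [Set.mem_preimage, hTa]; exact ha⟩
  have heq : ∀ z ∈ U ∩ T ⁻¹' U, fderiv ℝ M z = (fderiv ℝ M (T z)).comp T := by
    intro z hz
    have hMd : DifferentiableAt ℝ M (T z) :=
      (hC2.differentiableOn (by norm_num)).differentiableAt (hU.mem_nhds hz.2)
    calc fderiv ℝ M z = fderiv ℝ (M ∘ T) z := by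
          rw [show (M ∘ ⇑T) = M from funext fun y => by rw [Function.comp_apply, hT]; exact hsym y σ]
      _ = (fderiv ℝ M (T z)).comp (fderiv ℝ T z) := fderiv_comp z hMd T.differentiableAt
      _ = (fderiv ℝ M (T z)).comp T := by rw [T.fderiv]
  constructor
  · intro v
    have h1 := heq a haW
    rw [hTa] at h1
    conv_rhs => rw [h1]
    rw [ContinuousLinearMap.comp_apply, hT]
  · intro u v
    set P : ((Fin p → ℝ) →L[ℝ] ℝ) →L[ℝ] ((Fin p → ℝ) →L[ℝ] ℝ) :=
      (ContinuousLinearMap.compL ℝ (Fin p → ℝ) (Fin p → ℝ) ℝ).flip T with hPdef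
    have hPapp : ∀ f : (Fin p → ℝ) →L[ℝ] ℝ, P f = f.comp T := fun f => rfl
    have hev : fderiv ℝ M =ᶠ[nhds a] fun z => P (fderiv ℝ M (T z)) := by
      filter_upwards [hWopen.eventually_mem haW] with z hz
      rw [heq z hz, hPapp]
    have hB : HasFDerivAt (fderiv ℝ M) (fderiv ℝ (fderiv ℝ M) a) a :=
      (((hC2.contDiffAt (hU.mem_nhds ha)).fderiv_right
        (by norm_num : (1:WithTop ℕ∞)+1 ≤ 2)).differentiableAt one_ne_zero).hasFDerivAt
    have hBT : HasFDerivAt (fderiv ℝ M) (fderiv ℝ (fderiv ℝ M) a) (T a) := by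
      rw [hTa]; exact hB
    have hRHS : HasFDerivAt (fun z => P (fderiv ℝ M (T z)))
        (P.comp ((fderiv ℝ (fderiv ℝ M) a).comp T)) a :=
      P.hasFDerivAt.comp a (hBT.comp a T.hasFDerivAt)
    have hkey : fderiv ℝ (fderiv ℝ M) a
        = P.comp ((fderiv ℝ (fderiv ℝ M) a).comp T) := by
      conv_lhs => rw [hev.fderiv_eq]
      exact hRHS.fderiv
    conv_rhs => rw [hkey]
    simp only [ContinuousLinearMap.comp_apply, hPapp, hT]

/-- expansion of a linear functional over the standard basis -/
lemma lin_expand {p : ℕ} (L : (Fin p → ℝ) →L[ℝ] ℝ) (u : Fin p → ℝ) :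
    L u = ∑ i, u i * L (Pi.single i 1) := by
  have hbasis : ∑ i, u i • (Pi.single i 1 : Fin p → ℝ) = u := by
    ext k; simp [Finset.sum_apply, Pi.single_apply]
  conv_lhs => rw [← hbasis]
  simp [map_sum, map_smul]

lemma perm_exists {n : ℕ} {i0 i1 i j : Fin n} (h01 : i0 ≠ i1) (hij : i ≠ j) :
    ∃ σ : Equiv.Perm (Fin n), σ i0 = i ∧ σ i1 = j := by
  classical
  set τ := Equiv.swap i0 i with hτ
  have hji : τ j ≠ i0 := by
    intro h
    apply hij
    have h2 := congrArg τ h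
    rw [Equiv.swap_apply_self, Equiv.swap_apply_left] at h2
    exact h2.symm
  refine ⟨(Equiv.swap i1 (τ j)).trans τ, ?_, ?_⟩
  · have h1 : Equiv.swap i1 (τ j) i0 = i0 :=
      Equiv.swap_apply_of_ne_of_ne h01 (Ne.symm hji)
    rw [Equiv.trans_apply, h1, hτ, Equiv.swap_apply_left]
  · have h1 : Equiv.swap i1 (τ j) i1 = τ j := Equiv.swap_apply_left _ _
    simp [Equiv.trans_apply, h1, Equiv.swap_apply_self, hτ]

lemma single_comp_perm {n : ℕ} (σ : Equiv.Perm (Fin n)) (i : Fin n) :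
    (Pi.single i 1 : Fin n → ℝ) ∘ σ = Pi.single (σ.symm i) 1 := by
  funext k
  simp only [Function.comp_apply, Pi.single_apply]
  congr 1
  simp [eq_comm, Equiv.apply_eq_iff_eq_symm_apply, eq_iff_iff]
  constructor
  · intro h; rw [h]; simp
  · intro h; rw [h]; simp

end helpers

/-- Taylor-type expansion of a symmetric locally C² mean near the diagonal:
M(x·1 + t·s) = x + t·E(s) + (t²/2)·ξ_M(x)·Var(s) + o(t²) as t → 0. -/
theorem mean_expansion (p : ℕ) (hp : 2 ≤ p) (I : Set ℝ) (hIopen : IsOpen I)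
    (hIconn : I.OrdConnected) (M : (Fin p → ℝ) → ℝ)
    (hmean : ∀ y : Fin p → ℝ, (∀ i, y i ∈ I) →
      M y ∈ I ∧ (∃ i, y i ≤ M y) ∧ (∃ i, M y ≤ y i))
    (hsym : ∀ (y : Fin p → ℝ) (σ : Equiv.Perm (Fin p)), M (y ∘ σ) = M y)
    (U : Set (Fin p → ℝ)) (hU : IsOpen U) (hdiag : ∀ x ∈ I, (fun _ => x) ∈ U)
    (hC2 : ContDiffOn ℝ 2 M U) :
    ∀ x ∈ I, ∀ s : Fin p → ℝ,
      (fun t : ℝ => M (fun i => x + t * s i)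
          - (x + t * ((∑ i, s i) / p)
            + t ^ 2 / 2
              * (-(p : ℝ)^2 * fderiv ℝ (fun z => fderiv ℝ M z (Pi.single (⟨1, hp⟩ : Fin p) 1))
                  (fun _ => x) (Pi.single (⟨0, by omega⟩ : Fin p) 1))
              * ((∑ i, (s i)^2) / p - ((∑ i, s i) / p)^2)))
        =o[nhds (0 : ℝ)] fun t => t ^ 2 := by
  intro x hx s
  have key : ∀ (h0 : 0 < p) (h1 : 1 < p),
      (fun t : ℝ => M (fun i => x + t * s i)
          - (x + t * ((∑ i, s i) / p)
            + t ^ 2 / 2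
              * (-(p : ℝ)^2 * fderiv ℝ (fun z => fderiv ℝ M z (Pi.single (⟨1, h1⟩ : Fin p) 1))
                  (fun _ => x) (Pi.single (⟨0, h0⟩ : Fin p) 1))
              * ((∑ i, (s i)^2) / p - ((∑ i, s i) / p)^2)))
        =o[nhds (0 : ℝ)] fun t => t ^ 2 := by
    intro h0 h1
    classical
    set i0 : Fin p := ⟨0, h0⟩ with hi0def
    set i1 : Fin p := ⟨1, h1⟩ with hi1def
    set a : Fin p → ℝ := fun _ => x with hadef
    have haU : a ∈ U := hdiag x hx
    have hp0 : (p:ℝ) ≠ 0 := Nat.cast_ne_zero.2 (by omega)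
    have hMconst : ∀ x' ∈ I, M (fun _ => x') = x' := by
      intro x' hx'
      obtain ⟨-, ⟨i, hle1⟩, ⟨j, hle2⟩⟩ := hmean (fun _ => x') (fun _ => hx')
      exact le_antisymm hle2 hle1
    have h01 : i0 ≠ i1 := by simp [hi0def, hi1def, Fin.ext_iff]
    set B := fderiv ℝ (fderiv ℝ M) a with hBdef
    set D := fderiv ℝ M a with hDdef
    set b := B (Pi.single i0 1) (Pi.single i1 1) with hbdef
    set c := B (Pi.single i0 1) (Pi.single i0 1) with hcdef
    set d := D (Pi.single i0 1) with hddef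
    have hconst : ∀ σ : Equiv.Perm (Fin p), a ∘ σ = a := fun σ => rfl
    have hperm := fun σ => perm_invariance hU hC2 hsym haU hconst σ
    -- constancy of first partials
    have hD : ∀ i, D (Pi.single i 1) = d := by
      intro i
      have h := (hperm (Equiv.swap i0 i)).1 (Pi.single i 1)
      rw [single_comp_perm, Equiv.symm_swap, Equiv.swap_apply_right] at h
      exact h.symm
    -- constancy of second partials
    have hBij : ∀ i j, i ≠ j → B (Pi.single i 1) (Pi.single j 1) = b := by
      intro i j hij
      obtain ⟨σ, hσ0, hσ1⟩ := perm_exists h01 hij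
      have h := (hperm σ).2 (Pi.single i 1) (Pi.single j 1)
      rw [single_comp_perm, single_comp_perm,
        (by rw [← hσ0, Equiv.symm_apply_apply] : σ.symm i = i0),
        (by rw [← hσ1, Equiv.symm_apply_apply] : σ.symm j = i1)] at h
      exact h.symm
    have hBii : ∀ i, B (Pi.single i 1) (Pi.single i 1) = c := by
      intro i
      have h := (hperm (Equiv.swap i0 i)).2 (Pi.single i 1) (Pi.single i 1)
      rw [single_comp_perm, Equiv.symm_swap, Equiv.swap_apply_right] at h
      exact h.symm
    -- quadratic form formula
    have hQrow : ∀ u : Fin p → ℝ,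
        B u u = c * (∑ i, u i ^ 2) + b * ((∑ i, u i)^2 - ∑ i, u i ^ 2) := by
      intro u
      rw [bilin_expand]
      have hrow : ∀ i : Fin p, ∑ j, u i * u j * B (Pi.single i 1) (Pi.single j 1)
          = c * u i ^ 2 + b * (u i * (∑ j, u j) - u i ^ 2) := by
        intro i
        rw [← Finset.add_sum_erase _ (fun j => u i * u j * B (Pi.single i 1) (Pi.single j 1))
          (Finset.mem_univ i), hBii i]
        have hoff : ∑ j ∈ Finset.univ.erase i, u i * u j * B (Pi.single i 1) (Pi.single j 1)
            = ∑ j ∈ Finset.univ.erase i, u i * u j * b :=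
          Finset.sum_congr rfl fun j hj => by
            rw [hBij i j (Ne.symm (Finset.ne_of_mem_erase hj))]
        rw [hoff]
        have hsum : ∑ j ∈ Finset.univ.erase i, u i * u j * b
            = u i * ((∑ j, u j) - u i) * b := by
          rw [← Finset.sum_mul, ← Finset.mul_sum, Finset.sum_erase_eq_sub (Finset.mem_univ i)]
        rw [hsum]; ring
      rw [Finset.sum_congr rfl fun i _ => hrow i, Finset.sum_add_distrib]
      rw [← Finset.mul_sum, ← Finset.mul_sum, Finset.sum_sub_distrib, ← Finset.sum_mul]
      ring
    -- linear form formula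
    have hlin : ∀ u : Fin p → ℝ, D u = d * ∑ i, u i := by
      intro u
      rw [lin_expand]
      rw [Finset.sum_congr rfl fun i _ => by rw [hD i]]
      rw [← Finset.sum_mul]; ring
    -- the all-ones direction
    obtain ⟨ε, hεpos, hball⟩ := Metric.isOpen_iff.1 hIopen x hx
    obtain ⟨V₁, hV₁open, h0V₁, hV₁C2, hW1, hW2⟩ :=
      line_derivs hU hC2 a (fun _ => (1:ℝ)) haU
    have hone : (fun t : ℝ => M (a + t • (fun _ => (1:ℝ)))) =ᶠ[nhds 0] fun t => x + t := by
      filter_upwards [Metric.ball_mem_nhds (0:ℝ) hεpos] with t ht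
      have hxt : x + t ∈ I := hball (by
        simp only [Metric.mem_ball, Real.dist_eq, add_sub_cancel_left]
        simpa [Real.dist_eq] using ht)
      have hfun : (a + t • (fun _ => (1:ℝ))) = fun _ => x + t := by
        funext i; simp [hadef]
      rw [hfun]
      exact hMconst _ hxt
    have haff : deriv (fun u : ℝ => x + u) = fun _ : ℝ => (1:ℝ) := by
      funext t
      simpa using ((hasDerivAt_id t).const_add x).deriv
    have hpd : d * (p:ℝ) = 1 := by
      have h1' : deriv (fun t : ℝ => M (a + t • (fun _ => (1:ℝ)))) 0 = 1 := by
        rw [hone.deriv_eq, haff]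
      rw [hW1, hlin] at h1'
      simpa [Finset.sum_const, Finset.card_univ] using h1'
    have hpcb : c * (p:ℝ) + b * ((p:ℝ)^2 - (p:ℝ)) = 0 := by
      have h2' : deriv (deriv (fun t : ℝ => M (a + t • (fun _ => (1:ℝ))))) 0 = 0 := by
        rw [(hone.deriv).deriv_eq, haff]
        simp
      rw [hW2] at h2'
      have := (hQrow (fun _ => (1:ℝ))).symm.trans h2'
      simpa [Finset.sum_const, Finset.card_univ] using this
    -- mixed second partial is b
    have hBFD : HasFDerivAt (fderiv ℝ M) B a :=
      (((hC2.contDiffAt (hU.mem_nhds haU)).fderiv_right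
        (by norm_num : (1:WithTop ℕ∞)+1 ≤ 2)).differentiableAt one_ne_zero).hasFDerivAt
    have hmix : fderiv ℝ (fun z => fderiv ℝ M z (Pi.single i1 1)) a (Pi.single i0 1) = b := by
      have h := ((ContinuousLinearMap.apply ℝ ℝ
        ((Pi.single i1 1 : Fin p → ℝ))).hasFDerivAt.comp a hBFD).fderiv
      have hfeq : (⇑(ContinuousLinearMap.apply ℝ ℝ ((Pi.single i1 1 : Fin p → ℝ))) ∘ fderiv ℝ M)
          = fun z => fderiv ℝ M z (Pi.single i1 1) := rfl
      rw [hfeq] at h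
      rw [h]
      rfl
    -- expansion along s
    obtain ⟨V, hVopen, h0V, hVC2, hV1, hV2⟩ := line_derivs hU hC2 a s haU
    have hP := peano hVopen h0V hVC2
    have hg0 : M (a + (0:ℝ) • s) = x := by
      have : a + (0:ℝ) • s = a := by funext i; simp
      rw [this]
      exact hMconst x hx
    have hd' : d = 1 / (p:ℝ) := by
      rw [eq_div_iff hp0]
      exact hpd
    have hc' : c = (1 - (p:ℝ)) * b := by
      have hz : (p:ℝ) * (c - (1 - (p:ℝ)) * b) = 0 := by linear_combination hpcb
      rcases mul_eq_zero.1 hz with h | h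
      · exact absurd h hp0
      · linarith
    refine hP.congr' (Filter.Eventually.of_forall fun t => ?_) (Filter.EventuallyEq.refl _ _)
    have hMfun : M (a + t • s) = M (fun i => x + t * s i) := by congr 1
    have hV1' : deriv (fun t : ℝ => M (a + t • s)) 0 = D s := hV1
    have hV2' : deriv (deriv fun t : ℝ => M (a + t • s)) 0 = B s s := hV2
    beta_reduce
    rw [hMfun, hg0, hV1', hV2', hlin s, hQrow s, hmix, hd', hc']
    field_simp
    ring
  exact key (by omega) hp
end

section
/- Let E : I² → ℝ be a quasideviation. For every n ∈ ℕ and x_1,…,x_n ∈ I there exists a unique u ∈ I with E(x_1,u) + ⋯ + E(x_n,u) = 0; moreover, if not all x_i are equal then min(x_1,…,x_n) < u < max(x_1,…,x_n). -/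
/-!
If `∑ E(xᵢ, u) = 0` and `u < v`, let `xⱼ < u` minimise `c = E(xⱼ, v) / E(xⱼ, u) > 0`
among the points below `u`. Axiom (D3) says exactly that the points above `v` have a smaller
ratio, and comparing signs handles the remaining points, so termwise
`E(xᵢ, v) ≤ c · E(xᵢ, u)`, strictly whenever `u ≤ xᵢ`. Hence `∑ E(xᵢ, v) < c · 0`: the sum
changes sign at most once, which gives uniqueness, and the intermediate value theorem on
`[min xᵢ, max xᵢ]` gives existence.
-/

open Finset

namespace Real

lemma sign_eq_one_iff {r : ℝ} : sign r = 1 ↔ 0 < r := by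
  rcases lt_trichotomy r 0 with h | rfl | h
  · norm_num [sign_of_neg h, h.not_gt]
  · simp [sign_zero]
  · simp [sign_of_pos h, h]

lemma sign_eq_neg_one_iff {r : ℝ} : sign r = -1 ↔ r < 0 := by
  rcases lt_trichotomy r 0 with h | rfl | h
  · simp [sign_of_neg h, h]
  · simp [sign_zero]
  · norm_num [sign_of_pos h, h.not_gt]

end Real

namespace Quasideviation

variable {I : Set ℝ} {E : ℝ → ℝ → ℝ} {t u v : ℝ}

lemma pos_iff (hD1 : ∀ x ∈ I, ∀ u ∈ I, Real.sign (E x u) = Real.sign (x - u))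
    (ht : t ∈ I) (hu : u ∈ I) : 0 < E t u ↔ u < t := by
  rw [← Real.sign_eq_one_iff, hD1 t ht u hu, Real.sign_eq_one_iff, sub_pos]

lemma neg_iff (hD1 : ∀ x ∈ I, ∀ u ∈ I, Real.sign (E x u) = Real.sign (x - u))
    (ht : t ∈ I) (hu : u ∈ I) : E t u < 0 ↔ t < u := by
  rw [← Real.sign_eq_neg_one_iff, hD1 t ht u hu, Real.sign_eq_neg_one_iff, sub_neg]

lemma nonneg_iff (hD1 : ∀ x ∈ I, ∀ u ∈ I, Real.sign (E x u) = Real.sign (x - u))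
    (ht : t ∈ I) (hu : u ∈ I) : 0 ≤ E t u ↔ u ≤ t := by
  simpa only [not_lt] using (neg_iff hD1 ht hu).not

lemma nonpos_iff (hD1 : ∀ x ∈ I, ∀ u ∈ I, Real.sign (E x u) = Real.sign (x - u))
    (ht : t ∈ I) (hu : u ∈ I) : E t u ≤ 0 ↔ t ≤ u := by
  simpa only [not_lt] using (pos_iff hD1 ht hu).not

lemma eq_zero_iff (hD1 : ∀ x ∈ I, ∀ u ∈ I, Real.sign (E x u) = Real.sign (x - u))
    (ht : t ∈ I) (hu : u ∈ I) : E t u = 0 ↔ t = u := by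
  rw [← Real.sign_eq_zero_iff, hD1 t ht u hu, Real.sign_eq_zero_iff, sub_eq_zero]

lemma div_lt_div_of_lt_of_lt {a b : ℝ}
    (hD1 : ∀ x ∈ I, ∀ u ∈ I, Real.sign (E x u) = Real.sign (x - u))
    (hD3 : ∀ x ∈ I, ∀ y ∈ I, x < y → StrictAntiOn (fun u => E x u / E y u) (Set.Ioo x y))
    (ha : a ∈ I) (hb : b ∈ I) (hu : u ∈ I) (hv : v ∈ I) (hau : a < u) (huv : u < v)
    (hvb : v < b) : E b v / E b u < E a v / E a u := by
  have hD3' := hD3 a ha b hb (hau.trans (huv.trans hvb)) ⟨hau, huv.trans hvb⟩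
    ⟨hau.trans huv, hvb⟩ huv
  have hau' := (neg_iff hD1 ha hu).2 hau
  have hav' := (neg_iff hD1 ha hv).2 (hau.trans huv)
  have hbu' := (pos_iff hD1 hb hu).2 (huv.trans hvb)
  have hbv' := (pos_iff hD1 hb hv).2 hvb
  rw [div_lt_div_iff₀ hbv' hbu'] at hD3'
  rw [← neg_div_neg_eq (E a v), div_lt_div_iff₀ hbu' (neg_pos.2 hau')]
  linarith

lemma lt_div_mul_of_le {a : ℝ}
    (hD1 : ∀ x ∈ I, ∀ u ∈ I, Real.sign (E x u) = Real.sign (x - u))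
    (hD3 : ∀ x ∈ I, ∀ y ∈ I, x < y → StrictAntiOn (fun u => E x u / E y u) (Set.Ioo x y))
    (ha : a ∈ I) (ht : t ∈ I) (hu : u ∈ I) (hv : v ∈ I) (hau : a < u) (huv : u < v)
    (hut : u ≤ t) : E t v < E a v / E a u * E t u := by
  have hc : 0 < E a v / E a u :=
    div_pos_of_neg_of_neg ((neg_iff hD1 ha hv).2 (hau.trans huv)) ((neg_iff hD1 ha hu).2 hau)
  rcases hut.eq_or_lt with rfl | hut
  · rw [(eq_zero_iff hD1 hu hu).2 rfl, mul_zero]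
    exact (neg_iff hD1 hu hv).2 huv
  rcases le_or_gt t v with htv | hvt
  · calc E t v ≤ 0 := (nonpos_iff hD1 ht hv).2 htv
      _ < E a v / E a u * E t u := mul_pos hc ((pos_iff hD1 ht hu).2 hut)
  · exact (div_lt_iff₀ ((pos_iff hD1 ht hu).2 hut)).1
      (div_lt_div_of_lt_of_lt hD1 hD3 ha ht hu hv hau huv hvt)

variable {ι : Type*} [Fintype ι] {x : ι → ℝ}

lemma eq_of_sum_eq_zero_of_le
    (hD1 : ∀ x ∈ I, ∀ u ∈ I, Real.sign (E x u) = Real.sign (x - u))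
    (hx : ∀ i, x i ∈ I) (hu : u ∈ I) (hsum : ∑ i, E (x i) u = 0) (hle : ∀ i, u ≤ x i)
    (i : ι) :
    x i = u := by
  rw [← eq_zero_iff hD1 (hx i) hu]
  exact (sum_eq_zero_iff_of_nonneg fun j _ => (nonneg_iff hD1 (hx j) hu).2 (hle j)).1 hsum i
    (mem_univ i)

lemma eq_of_sum_eq_zero_of_ge
    (hD1 : ∀ x ∈ I, ∀ u ∈ I, Real.sign (E x u) = Real.sign (x - u))
    (hx : ∀ i, x i ∈ I) (hu : u ∈ I) (hsum : ∑ i, E (x i) u = 0) (hge : ∀ i, x i ≤ u)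
    (i : ι) :
    x i = u := by
  rw [← eq_zero_iff hD1 (hx i) hu]
  exact (sum_eq_zero_iff_of_nonpos fun j _ => (nonpos_iff hD1 (hx j) hu).2 (hge j)).1 hsum i
    (mem_univ i)

lemma sum_neg_of_sum_eq_zero_of_lt [Nonempty ι]
    (hD1 : ∀ x ∈ I, ∀ u ∈ I, Real.sign (E x u) = Real.sign (x - u))
    (hD3 : ∀ x ∈ I, ∀ y ∈ I, x < y → StrictAntiOn (fun u => E x u / E y u) (Set.Ioo x y))
    (hx : ∀ i, x i ∈ I) (hu : u ∈ I) (hv : v ∈ I) (hsum : ∑ i, E (x i) u = 0) (huv : u < v) :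
    ∑ i, E (x i) v < 0 := by
  by_cases hbelow : ∃ j, x j < u
  · obtain ⟨j, hj, hmin⟩ := (univ.filter fun j => x j < u).exists_min_image
      (fun j => E (x j) v / E (x j) u) (by simpa [Finset.Nonempty] using hbelow)
    simp only [mem_filter, mem_univ, true_and] at hj hmin
    obtain ⟨i, hi⟩ : ∃ i, u ≤ x i := by
      by_contra! habove
      have := eq_of_sum_eq_zero_of_ge hD1 hx hu hsum (fun i => (habove i).le) j
      linarith
    have hterm (k : ι) : E (x k) v ≤ E (x j) v / E (x j) u * E (x k) u := by
      rcases lt_or_ge (x k) u with hk | hk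
      · exact (le_div_iff_of_neg ((neg_iff hD1 (hx k) hu).2 hk)).1 (hmin k hk)
      · exact (lt_div_mul_of_le hD1 hD3 (hx j) (hx k) hu hv hj huv hk).le
    calc ∑ k, E (x k) v < ∑ k, E (x j) v / E (x j) u * E (x k) u :=
          sum_lt_sum (fun k _ => hterm k)
            ⟨i, mem_univ i, lt_div_mul_of_le hD1 hD3 (hx j) (hx i) hu hv hj huv hi⟩
      _ = 0 := by rw [← mul_sum, hsum, mul_zero]
  · push Not at hbelow
    have hall := eq_of_sum_eq_zero_of_le hD1 hx hu hsum hbelow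
    exact sum_neg (fun i _ => hall i ▸ (neg_iff hD1 hu hv).2 huv) univ_nonempty

lemma eq_of_sum_eq_zero [Nonempty ι]
    (hD1 : ∀ x ∈ I, ∀ u ∈ I, Real.sign (E x u) = Real.sign (x - u))
    (hD3 : ∀ x ∈ I, ∀ y ∈ I, x < y → StrictAntiOn (fun u => E x u / E y u) (Set.Ioo x y))
    (hx : ∀ i, x i ∈ I) (hu : u ∈ I) (hv : v ∈ I) (hu0 : ∑ i, E (x i) u = 0)
    (hv0 : ∑ i, E (x i) v = 0) : u = v := by
  rcases lt_trichotomy u v with h | h | h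
  · exact absurd hv0 (sum_neg_of_sum_eq_zero_of_lt hD1 hD3 hx hu hv hu0 h).ne
  · exact h
  · exact absurd hu0 (sum_neg_of_sum_eq_zero_of_lt hD1 hD3 hx hv hu hv0 h).ne

lemma exists_sum_eq_zero [Nonempty ι] (hI : I.OrdConnected)
    (hD1 : ∀ x ∈ I, ∀ u ∈ I, Real.sign (E x u) = Real.sign (x - u))
    (hD2 : ∀ x ∈ I, ContinuousOn (fun u => E x u) I) (hx : ∀ i, x i ∈ I) :
    ∃ u ∈ I, ∑ i, E (x i) u = 0 := by
  obtain ⟨a, -, ha⟩ := exists_mem_eq_inf' univ_nonempty x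
  obtain ⟨b, -, hb⟩ := exists_mem_eq_sup' univ_nonempty x
  set m := univ.inf' univ_nonempty x
  set M := univ.sup' univ_nonempty x
  have hm : m ∈ I := ha ▸ hx a
  have hM : M ∈ I := hb ▸ hx b
  have hmM : Set.Icc m M ⊆ I := hI.out hm hM
  have hcont : ContinuousOn (fun u => ∑ i, E (x i) u) (Set.Icc m M) :=
    (continuousOn_finsetSum _ fun i _ => hD2 (x i) (hx i)).mono hmM
  have hfm : 0 ≤ ∑ i, E (x i) m :=
    sum_nonneg fun i _ => (nonneg_iff hD1 (hx i) hm).2 (inf'_le x (mem_univ i))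
  have hfM : ∑ i, E (x i) M ≤ 0 :=
    sum_nonpos fun i _ => (nonpos_iff hD1 (hx i) hM).2 (le_sup' x (mem_univ i))
  obtain ⟨u, hu, hu0⟩ := intermediate_value_Icc'
    ((inf'_le x (mem_univ a)).trans (le_sup' x (mem_univ a))) hcont ⟨hfM, hfm⟩
  exact ⟨u, hmM hu, hu0⟩

lemma inf'_lt_and_lt_sup'_of_sum_eq_zero
    (hD1 : ∀ x ∈ I, ∀ u ∈ I, Real.sign (E x u) = Real.sign (x - u))
    (hx : ∀ i, x i ∈ I) (hu : u ∈ I) (hsum : ∑ i, E (x i) u = 0) (hx' : ¬ ∀ i j, x i = x j)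
    (h : (univ : Finset ι).Nonempty) : univ.inf' h x < u ∧ u < univ.sup' h x := by
  constructor
  · by_contra! hle
    have hall := eq_of_sum_eq_zero_of_le hD1 hx hu hsum fun i =>
      hle.trans (inf'_le x (mem_univ i))
    exact hx' fun i j => (hall i).trans (hall j).symm
  · by_contra! hge
    have hall := eq_of_sum_eq_zero_of_ge hD1 hx hu hsum fun i =>
      (le_sup' x (mem_univ i)).trans hge
    exact hx' fun i j => (hall i).trans (hall j).symm

end Quasideviation

open Quasideviation in
theorem quasideviation_mean_exists_unique_general (I : Set ℝ)
    (hIconn : I.OrdConnected) (E : ℝ → ℝ → ℝ)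
    (hD1 : ∀ x ∈ I, ∀ u ∈ I, Real.sign (E x u) = Real.sign (x - u))
    (hD2 : ∀ x ∈ I, ContinuousOn (fun u => E x u) I)
    (hD3 : ∀ x ∈ I, ∀ y ∈ I, x < y →
      StrictAntiOn (fun u => E x u / E y u) (Set.Ioo x y))
    (n : ℕ) (hn : 0 < n) (x : Fin n → ℝ) (hx : ∀ i, x i ∈ I) :
    (∃! u, u ∈ I ∧ ∑ i, E (x i) u = 0) ∧
    ∀ u ∈ I, ∑ i, E (x i) u = 0 → (¬ ∀ i j, x i = x j) →
      Finset.univ.inf' (⟨⟨0, hn⟩, Finset.mem_univ _⟩ : Finset.univ.Nonempty) x < u ∧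
      u < Finset.univ.sup' (⟨⟨0, hn⟩, Finset.mem_univ _⟩ : Finset.univ.Nonempty) x := by
  have : Nonempty (Fin n) := ⟨⟨0, hn⟩⟩
  obtain ⟨u, hu, hu0⟩ := exists_sum_eq_zero hIconn hD1 hD2 hx
  refine ⟨⟨u, ⟨hu, hu0⟩, fun v ⟨hv, hv0⟩ => eq_of_sum_eq_zero hD1 hD3 hx hv hu hv0 hu0⟩, ?_⟩
  intro v hv hv0 hx'
  exact inf'_lt_and_lt_sup'_of_sum_eq_zero hD1 hx hv hv0 hx' _

/-- existence and uniqueness of the quasideviation mean, and strict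
internality for nonconstant vectors. -/
theorem quasideviation_mean_exists_unique (I : Set ℝ) (hIopen : IsOpen I)
    (hIconn : I.OrdConnected) (E : ℝ → ℝ → ℝ)
    (hD1 : ∀ x ∈ I, ∀ u ∈ I, Real.sign (E x u) = Real.sign (x - u))
    (hD2 : ∀ x ∈ I, ContinuousOn (fun u => E x u) I)
    (hD3 : ∀ x ∈ I, ∀ y ∈ I, x < y →
      StrictAntiOn (fun u => E x u / E y u) (Set.Ioo x y))
    (n : ℕ) (hn : 0 < n) (x : Fin n → ℝ) (hx : ∀ i, x i ∈ I) :
    (∃! u, u ∈ I ∧ ∑ i, E (x i) u = 0) ∧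
    ∀ u ∈ I, ∑ i, E (x i) u = 0 → (¬ ∀ i j, x i = x j) →
      Finset.univ.inf' (⟨⟨0, hn⟩, Finset.mem_univ _⟩ : Finset.univ.Nonempty) x < u ∧
      u < Finset.univ.sup' (⟨⟨0, hn⟩, Finset.mem_univ _⟩ : Finset.univ.Nonempty) x :=
  quasideviation_mean_exists_unique_general I hIconn E hD1 hD2 hD3 n hn x hx
end
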